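/- Let Γ be a finite set of complex numbers such that for every α ∈ Γ there exists β ∈ Γ with α - β̄ ∈ M, where M = {2πi⟨k,ω⟩ : k ∈ ℤ^d}. Define α ~linked~ β iff α - β̄ ∈ M, and chain-linked as the transitive closure via chains. Then: an element α ∈ Γ is linked to itself (i.e. α - ᾱ ∈ M) if and only if the chain-linked equivalence class of α contains a loop of odd length. -/

import Mathlib

open Complex

/-- `α` and `β` are linked: `α - β̄ ∈ M = {2πi⟨k,ω⟩ : k ∈ ℤ^d}`. -/
def Linked {d : ℕ} (ω : Fin d → ℝ) (α β : ℂ) : Prop :=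
  ∃ k : Fin d → ℤ, α - (starRingEnd ℂ) β =
    2 * Real.pi * Complex.I * (∑ i, (k i : ℝ) * ω i)

/-- A chain in `Γ`: a nonempty list of elements of `Γ` with consecutive elements linked. -/
def IsChainIn {d : ℕ} (ω : Fin d → ℝ) (Γ : Finset ℂ) (c : List ℂ) : Prop :=
  c ≠ [] ∧ (∀ x ∈ c, x ∈ Γ) ∧ c.Chain' (Linked ω)

/-- `α` and `β` are chain-linked in `Γ`: there is a chain from `α` to `β`. -/
def ChainLinked {d : ℕ} (ω : Fin d → ℝ) (Γ : Finset ℂ) (α β : ℂ) : Prop :=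
  ∃ c : List ℂ, IsChainIn ω Γ c ∧ c.head? = some α ∧ c.getLast? = some β

/-! Write `σ` for complex conjugation. Linking says `α ≡ σ β` modulo the subgroup `M`, and `σ`
preserves `M`, so along a chain of length `n` from `α` to `β` we get `α ≡ σⁿ β`. An odd loop
at `γ` gives `γ ≡ σ γ`. If `α ≡ σᵐ γ`, then `σ α ≡ σᵐ⁺¹ γ = σᵐ (σ γ) ≡ σᵐ γ ≡ α`. -/

open ComplexConjugate

section FrequencyLattice

variable {d : ℕ} {ω : Fin d → ℝ}

/-- The subgroup `M = {2πi⟨k,ω⟩ : k ∈ ℤ^d}` of `ℂ`. -/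
noncomputable def frequencyLattice (ω : Fin d → ℝ) : AddSubgroup ℂ :=
  AddMonoidHom.range
    { toFun := fun k : Fin d → ℤ => 2 * Real.pi * Complex.I * (∑ i, (k i : ℝ) * ω i)
      map_zero' := by simp
      map_add' := fun k l => by
        simp only [Pi.add_apply, Int.cast_add, add_mul, Finset.sum_add_distrib, ofReal_add]
        ring }

lemma linked_iff_sub_conj_mem {α β : ℂ} : Linked ω α β ↔ α - conj β ∈ frequencyLattice ω :=
  exists_congr fun _ => eq_comm

lemma conj_mem_frequencyLattice {x : ℂ} (hx : x ∈ frequencyLattice ω) :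
    conj x ∈ frequencyLattice ω := by
  obtain ⟨k, rfl⟩ := hx
  refine ⟨-k, ?_⟩
  simp only [AddMonoidHom.coe_mk, ZeroHom.coe_mk, Pi.neg_apply, Int.cast_neg, neg_mul,
    Finset.sum_neg_distrib, ofReal_neg, map_mul, map_ofNat, conj_ofReal, conj_I]
  ring

lemma iterate_conj_mem_frequencyLattice {x : ℂ} (hx : x ∈ frequencyLattice ω) (n : ℕ) :
    conj^[n] x ∈ frequencyLattice ω := by
  induction n with
  | zero => exact hx
  | succ n ih =>
    rw [Function.iterate_succ_apply']
    exact conj_mem_frequencyLattice ih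

lemma sub_iterate_conj_mem_of_isChain :
    ∀ (c : List ℂ) {a b : ℂ}, c.IsChain (Linked ω) → c.head? = some a → c.getLast? = some b →
      a - conj^[c.length - 1] b ∈ frequencyLattice ω
  | [], _, _, _, ha, _ => by simp at ha
  | [x], _, _, _, ha, hb => by
    simp only [List.head?_cons, List.getLast?_singleton, Option.some.injEq] at ha hb
    subst ha hb
    simp
  | x :: y :: rest, _, b, hc, ha, hb => by
    rw [List.isChain_cons_cons] at hc
    simp only [List.head?_cons, Option.some.injEq] at ha
    subst ha
    have hy := sub_iterate_conj_mem_of_isChain (y :: rest) hc.2 rfl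
      (by rwa [List.getLast?_cons_cons] at hb)
    have hsplit : x - conj^[(x :: y :: rest).length - 1] b =
        (x - conj y) + conj (y - conj^[(y :: rest).length - 1] b) := by
      simp only [List.length_cons, Nat.add_sub_cancel, Function.iterate_succ_apply', map_sub]
      ring
    rw [hsplit]
    exact add_mem (linked_iff_sub_conj_mem.mp hc.1) (conj_mem_frequencyLattice hy)

lemma sub_conj_mem_of_sub_iterate_conj_mem {a g : ℂ} {m : ℕ}
    (ha : a - conj^[m] g ∈ frequencyLattice ω) (hg : g - conj g ∈ frequencyLattice ω) :
    a - conj a ∈ frequencyLattice ω := by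
  have hshift : conj^[m] g - conj (conj^[m] g) = conj^[m] (g - conj g) := by
    rw [← Function.iterate_succ_apply' (f := conj), Function.iterate_succ_apply,
      ← RingHom.coe_pow, map_sub]
  have hsplit : a - conj a =
      (a - conj^[m] g) + conj^[m] (g - conj g) - conj (a - conj^[m] g) := by
    rw [← hshift, map_sub]
    ring
  rw [hsplit]
  exact sub_mem (add_mem ha (iterate_conj_mem_frequencyLattice hg m))
    (conj_mem_frequencyLattice ha)

end FrequencyLattice

theorem linked_self_iff_odd_loop
    (d : ℕ) (ω : Fin d → ℝ)
    (Γ : Finset ℂ)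
    (α : ℂ) (hα : α ∈ Γ) :
    Linked ω α α ↔
      ∃ γ : ℂ, ChainLinked ω Γ α γ ∧
        ∃ c : List ℂ, IsChainIn ω Γ c ∧ c.head? = some γ ∧ c.getLast? = some γ ∧
          2 ≤ c.length ∧ Odd (c.length - 1) := by
  constructor
  · intro h
    refine ⟨α, ⟨[α], ⟨by simp, by simpa, List.isChain_singleton α⟩, rfl, rfl⟩,
      [α, α], ⟨by simp, by simpa using hα, List.isChain_pair.mpr h⟩, rfl, rfl, le_rfl, by simp⟩
  · rintro ⟨γ, ⟨c₁, ⟨-, -, hc₁⟩, hα₁, hγ₁⟩, c, ⟨-, -, hc⟩, hγ, hγ', -, hodd⟩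
    have hloop := sub_iterate_conj_mem_of_isChain c hc hγ hγ'
    rw [Function.Involutive.iterate_odd (f := conj) conj_conj hodd] at hloop
    exact linked_iff_sub_conj_mem.mpr <| sub_conj_mem_of_sub_iterate_conj_mem
      (sub_iterate_conj_mem_of_isChain c₁ hc₁ hα₁ hγ₁) hloop
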